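/- For any n ∈ ℕ, i ∈ {0,…,n}, j ∈ {0,…,n−i}, the Stirling operators of the first kind satisfy the convolution identity C(i+j, i)·s(n, i+j) = Σ_{k=i}^{n−j} C(n,k) · Sym_{i+j}(s(k,i) ⊗ s(n−k, j)), as operators from symmetric functions on X^n to symmetric functions on X^{i+j}, where (s(k,i) ⊗ s(n−k,j)) applies s(k,i) to the first k variables and s(n−k,j) to the last n−k variables, followed by symmetrization Sym_{i+j}. The same identity holds with s replaced throughout by the Stirling operators of the second kind S. -/

import Mathlib

open Finset

section Defs

variable {X : Type*} [Fintype X] [DecidableEq X]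

/-- The falling factorial measure `(ω)_n` on `X^n`, given by the density
`(ω)_n(y₁,…,y_n) = ω(y₁)(ω(y₂)−δ_{y₁}(y₂))⋯(ω(y_n)−δ_{y₁}(y_n)−⋯−δ_{y_{n−1}}(y_n))`. -/
noncomputable def ff (ω : X → ℝ) : (n : ℕ) → (Fin n → X) → ℝ
  | 0 => fun _ => 1
  | n + 1 => fun y =>
      ff ω n (fun i => y i.castSucc) *
        (ω (y (Fin.last n)) - ∑ i : Fin n, if y i.castSucc = y (Fin.last n) then (1 : ℝ) else 0)

/-- Dirac measure at `x`. -/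
noncomputable def diracMeas (x : X) : X → ℝ := fun a => if a = x then 1 else 0

/-- The measure `δ_{x₁}+⋯+δ_{x_k}` of a multiset `[x₁,…,x_k]`. -/
noncomputable def msMeas {k : ℕ} (x : Fin k → X) : X → ℝ :=
  fun a => ((Finset.univ.filter (fun i => x i = a)).card : ℝ)

/-- Integration `⟨μ, f⟩` of a function against a measure on `X^n`. -/
noncomputable def pairing (n : ℕ) (μ f : (Fin n → X) → ℝ) : ℝ :=
  ∑ y : Fin n → X, μ y * f y

/-- Symmetrization of a function/measure on `X^n`. -/
noncomputable def symmFun (n : ℕ) (μ : (Fin n → X) → ℝ) : (Fin n → X) → ℝ :=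
  fun y => (∑ π : Equiv.Perm (Fin n), μ (y ∘ π)) / n.factorial

/-- Tensor product of measures/functions on `X^k` and `X^m`. -/
noncomputable def tensFun {k m : ℕ} (μ : (Fin k → X) → ℝ) (ν : (Fin m → X) → ℝ) :
    (Fin (k + m) → X) → ℝ :=
  fun y => μ (fun i => y (Fin.castAdd m i)) * ν (fun j => y (Fin.natAdd k j))

/-- Re-indexing along an equality of dimensions. -/
def castFun {m n : ℕ} (h : m = n) (μ : (Fin m → X) → ℝ) : (Fin n → X) → ℝ :=
  fun y => μ (fun i => y (Fin.cast h i))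

/-- The product measure `ω^{⊗n}` (and likewise the tensor power `ξ^{⊗n}` of a function). -/
noncomputable def prodMeas (ω : X → ℝ) (n : ℕ) : (Fin n → X) → ℝ :=
  fun y => ∏ i, ω (y i)

/-- A function on `X^n` is symmetric. -/
def IsSymmFun {n : ℕ} (f : (Fin n → X) → ℝ) : Prop :=
  ∀ (π : Equiv.Perm (Fin n)) (y : Fin n → X), f (y ∘ π) = f y

end Defs

/-- The set of surjections `Fin n → Fin k`; these correspond to set partitions of
`{1,…,n}` into `k` nonempty blocks together with an ordering of the blocks. -/
noncomputable def surjs (n k : ℕ) : Finset (Fin n → Fin k) :=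
  Finset.univ.filter (fun g => Function.Surjective g)

/-- Cardinality of the fiber `g⁻¹(i)` (the size of block `i`). -/
def fiberCard {n k : ℕ} (g : Fin n → Fin k) (i : Fin k) : ℕ :=
  (Finset.univ.filter (fun j => g j = i)).card

section Ops

variable {X : Type*} [Fintype X] [DecidableEq X]

/-- Stirling operator of the second kind `S(n,k) = Σ_{λ ∈ UP(n,k)} D_λ`:
summing the substitute-and-symmetrize operators over unordered partitions of `{1,…,n}`
into `k` nonempty blocks is the same as summing `f(y ∘ g)` over the surjections
`g : Fin n → Fin k` and dividing by `k!`. -/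
noncomputable def Sop (n k : ℕ) (f : (Fin n → X) → ℝ) : (Fin k → X) → ℝ :=
  fun y => (∑ g ∈ surjs n k, f (y ∘ g)) / k.factorial

/-- Unsigned Stirling operator of the first kind
`c(n,k) = Σ_{λ={λ₁,…,λ_k} ∈ UP(n,k)} (|λ₁|−1)!⋯(|λ_k|−1)! · D_λ`. -/
noncomputable def cop (n k : ℕ) (f : (Fin n → X) → ℝ) : (Fin k → X) → ℝ :=
  fun y => (∑ g ∈ surjs n k, (∏ i : Fin k, ((fiberCard g i - 1).factorial : ℝ)) * f (y ∘ g)) /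
    k.factorial

/-- Stirling operator of the first kind `s(n,k) = (−1)^{n−k} c(n,k)`. -/
noncomputable def sop (n k : ℕ) (f : (Fin n → X) → ℝ) : (Fin k → X) → ℝ :=
  fun y => (-1 : ℝ) ^ (n - k) * cop n k f y

/-- Lah operator `L(n,k) = Σ_{λ={λ₁,…,λ_k} ∈ UP(n,k)} |λ₁|!⋯|λ_k|! · D_λ`. -/
noncomputable def Lop (n k : ℕ) (f : (Fin n → X) → ℝ) : (Fin k → X) → ℝ :=
  fun y => (∑ g ∈ surjs n k, (∏ i : Fin k, ((fiberCard g i).factorial : ℝ)) * f (y ∘ g)) /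
    k.factorial

end Ops

/-- `op1 ⊗ op2`: apply `op1` to the first group of variables and `op2` to the last group. -/
def opTens {X : Type*} {k l p q : ℕ}
    (op1 : ((Fin k → X) → ℝ) → ((Fin p → X) → ℝ))
    (op2 : ((Fin l → X) → ℝ) → ((Fin q → X) → ℝ))
    (f : (Fin (k + l) → X) → ℝ) : (Fin (p + q) → X) → ℝ :=
  fun y => op1
    (fun u => op2 (fun v => f (Fin.append u v)) (fun b => y (Fin.natAdd p b)))
    (fun a => y (Fin.castAdd q a))

/-! Both Stirling operators are instances of `surjOp W`, which sums `f (y ∘ g)` over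
surjections `g : Fin n → Fin k` with the multiplicative weight `∏ₜ W |g⁻¹ t|`. A surjection onto
`Fin (i + j)` is the same as the set `A` of points sent below `i` together with surjections
`A → Fin i` and `Aᶜ → Fin j`, and its weight is the product of their weights. For symmetric `f`,
relabelling `A` as the first `|A| = k` points makes the contribution of `A` depend on `k` only,
which gives the factor `C(n, k)`; the symmetrization over `Fin (i + j)` costs nothing since weights
are invariant under relabelling the target, and `C(i + j, i) (i! j!) = (i + j)!` matches the
normalizations. -/

section SurjectionWeights

variable {n k : ℕ}

lemma mem_surjs {g : Fin n → Fin k} : g ∈ surjs n k ↔ Function.Surjective g := by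
  simp [surjs]

lemma fiberCard_comp_equiv {n' : ℕ} (g : Fin n' → Fin k) (e : Fin n ≃ Fin n') (t : Fin k) :
    fiberCard (g ∘ e) t = fiberCard g t := by
  simp only [fiberCard, card_filter, Function.comp_apply]
  exact e.sum_comp fun x => if g x = t then 1 else 0

lemma fiberCard_perm_comp (g : Fin n → Fin k) (π : Equiv.Perm (Fin k)) (t : Fin k) :
    fiberCard (π ∘ g) (π t) = fiberCard g t := by
  simp [fiberCard]

lemma sum_fiberCard (g : Fin n → Fin k) : ∑ t, fiberCard g t = n := by
  simpa [fiberCard] using (card_eq_sum_card_fiberwise fun x (_ : x ∈ univ) => mem_univ (g x)).symm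

lemma one_le_fiberCard {g : Fin n → Fin k} (hg : Function.Surjective g) (t : Fin k) :
    1 ≤ fiberCard g t := by
  obtain ⟨x, hx⟩ := hg t
  exact card_pos.mpr ⟨x, by simp [hx]⟩

noncomputable def surjWeight (W : ℕ → ℝ) (g : Fin n → Fin k) : ℝ :=
  ∏ t, W (fiberCard g t)

lemma surjWeight_comp_equiv (W : ℕ → ℝ) {n' : ℕ} (g : Fin n' → Fin k) (e : Fin n ≃ Fin n') :
    surjWeight W (g ∘ e) = surjWeight W g := by
  simp only [surjWeight, fiberCard_comp_equiv]

lemma surjWeight_perm_comp (W : ℕ → ℝ) (g : Fin n → Fin k) (π : Equiv.Perm (Fin k)) :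
    surjWeight W (π ∘ g) = surjWeight W g := by
  rw [surjWeight, ← Equiv.prod_comp π]
  simp only [fiberCard_perm_comp, surjWeight]

noncomputable def surjOp {X : Type*} (W : ℕ → ℝ) (n k : ℕ) (f : (Fin n → X) → ℝ) :
    (Fin k → X) → ℝ :=
  fun y => (∑ g ∈ surjs n k, surjWeight W g * f (y ∘ g)) / k.factorial

lemma sum_surjs_perm_comp (W : ℕ → ℝ) (F : (Fin n → Fin k) → ℝ) (π : Equiv.Perm (Fin k)) :
    ∑ g ∈ surjs n k, surjWeight W g * F (π ∘ g) = ∑ g ∈ surjs n k, surjWeight W g * F g := by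
  refine sum_nbij' (π ∘ ·) (π.symm ∘ ·) ?_ ?_ ?_ ?_ ?_
  · simp [mem_surjs]
  · simp [mem_surjs]
  · simp [← Function.comp_assoc]
  · simp [← Function.comp_assoc]
  · simp [surjWeight_perm_comp]

end SurjectionWeights

section BlockMap

variable {i j k m : ℕ}

def blockMap (g₁ : Fin k → Fin i) (g₂ : Fin m → Fin j) : Fin (k + m) → Fin (i + j) :=
  Fin.append (Fin.castAdd j ∘ g₁) (Fin.natAdd i ∘ g₂)

@[simp]
lemma blockMap_castAdd (g₁ : Fin k → Fin i) (g₂ : Fin m → Fin j) (a : Fin k) :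
    blockMap g₁ g₂ (Fin.castAdd m a) = Fin.castAdd j (g₁ a) := by
  simp [blockMap]

@[simp]
lemma blockMap_natAdd (g₁ : Fin k → Fin i) (g₂ : Fin m → Fin j) (b : Fin m) :
    blockMap g₁ g₂ (Fin.natAdd k b) = Fin.natAdd i (g₂ b) := by
  simp [blockMap]

lemma append_comp_eq_comp_blockMap {α : Type*} (v : Fin (i + j) → α) (g₁ : Fin k → Fin i)
    (g₂ : Fin m → Fin j) (x : Fin (k + m)) :
    Fin.append ((fun a => v (Fin.castAdd j a)) ∘ g₁) ((fun b => v (Fin.natAdd i b)) ∘ g₂) x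
      = v (blockMap g₁ g₂ x) := by
  induction x using Fin.addCases <;> simp

lemma blockMap_lt_iff (g₁ : Fin k → Fin i) (g₂ : Fin m → Fin j) (x : Fin (k + m)) :
    (blockMap g₁ g₂ x : ℕ) < i ↔ (x : ℕ) < k := by
  induction x using Fin.addCases <;> simp

lemma blockMap_injective {g₁ g₁' : Fin k → Fin i} {g₂ g₂' : Fin m → Fin j}
    (h : blockMap g₁ g₂ = blockMap g₁' g₂') : g₁ = g₁' ∧ g₂ = g₂' := by
  refine ⟨funext fun a => ?_, funext fun b => ?_⟩
  · simpa using congrFun h (Fin.castAdd m a)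
  · simpa using congrFun h (Fin.natAdd k b)

lemma surjective_blockMap_iff {g₁ : Fin k → Fin i} {g₂ : Fin m → Fin j} :
    Function.Surjective (blockMap g₁ g₂) ↔ Function.Surjective g₁ ∧ Function.Surjective g₂ := by
  have : blockMap g₁ g₂ = finSumFinEquiv ∘ Sum.map g₁ g₂ ∘ finSumFinEquiv.symm := by
    funext x
    induction x using Fin.addCases <;> simp
  rw [this, Equiv.comp_surjective, Equiv.surjective_comp, Sum.map_surjective]

lemma exists_blockMap_eq {G : Fin (k + m) → Fin (i + j)}
    (hG : ∀ x, (G x : ℕ) < i ↔ (x : ℕ) < k) : ∃ g₁ g₂, blockMap g₁ g₂ = G := by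
  refine ⟨fun a => ⟨G (Fin.castAdd m a), (hG _).2 (by simp)⟩,
    fun b => ⟨G (Fin.natAdd k b) - i, ?_⟩, funext fun x => ?_⟩
  · have := (hG (Fin.natAdd k b)).not.2 (by simp)
    omega
  · induction x using Fin.addCases with
    | left a => ext; simp
    | right b =>
      have := (hG (Fin.natAdd k b)).not.2 (by simp)
      ext; simp only [blockMap_natAdd, Fin.natAdd_mk]; omega

lemma fiberCard_blockMap_castAdd (g₁ : Fin k → Fin i) (g₂ : Fin m → Fin j) (t : Fin i) :
    fiberCard (blockMap g₁ g₂) (Fin.castAdd j t) = fiberCard g₁ t := by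
  simp only [fiberCard, card_filter, Fin.sum_univ_add]
  simp only [blockMap_castAdd, blockMap_natAdd, Fin.ext_iff, Fin.val_castAdd, Fin.val_natAdd,
    sum_boole, Nat.cast_id, Nat.add_eq_left, card_eq_zero, filter_eq_empty_iff, mem_univ,
    forall_const]
  omega

lemma fiberCard_blockMap_natAdd (g₁ : Fin k → Fin i) (g₂ : Fin m → Fin j) (t : Fin j) :
    fiberCard (blockMap g₁ g₂) (Fin.natAdd i t) = fiberCard g₂ t := by
  simp only [fiberCard, card_filter, Fin.sum_univ_add]
  simp only [blockMap_castAdd, blockMap_natAdd, Fin.ext_iff, Fin.val_castAdd, Fin.val_natAdd,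
    sum_boole, Nat.cast_id, Nat.add_left_cancel_iff, Nat.add_eq_right, card_eq_zero,
    filter_eq_empty_iff, mem_univ, forall_const]
  omega

lemma surjWeight_blockMap (W : ℕ → ℝ) (g₁ : Fin k → Fin i) (g₂ : Fin m → Fin j) :
    surjWeight W (blockMap g₁ g₂) = surjWeight W g₁ * surjWeight W g₂ := by
  simp only [surjWeight, Fin.prod_univ_add, fiberCard_blockMap_castAdd, fiberCard_blockMap_natAdd]

lemma sum_surjs_blockMap (Φ : (Fin (k + m) → Fin (i + j)) → ℝ) :
    ∑ G ∈ surjs (k + m) (i + j) with ∀ x : Fin (k + m), (G x : ℕ) < i ↔ (x : ℕ) < k, Φ G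
      = ∑ g₁ ∈ surjs k i, ∑ g₂ ∈ surjs m j, Φ (blockMap g₁ g₂) := by
  rw [← sum_product']
  symm
  refine sum_bij (fun p _ => blockMap p.1 p.2) ?_ ?_ ?_ fun _ _ => rfl
  · intro p hp
    simpa [mem_surjs, surjective_blockMap_iff, blockMap_lt_iff] using hp
  · intro p _ q _ h
    exact Prod.ext_iff.2 (blockMap_injective h)
  · intro G hG
    simp only [mem_filter, mem_surjs] at hG
    obtain ⟨g₁, g₂, rfl⟩ := exists_blockMap_eq hG.2
    exact ⟨(g₁, g₂), by simpa [mem_surjs, surjective_blockMap_iff] using hG.1, rfl⟩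

end BlockMap

section LowPreimage

variable {n i j k m : ℕ}

def lowPreimage (i : ℕ) (g : Fin n → Fin (i + j)) : Finset (Fin n) :=
  univ.filter fun z => (g z : ℕ) < i

lemma mem_lowPreimage {g : Fin n → Fin (i + j)} {z : Fin n} :
    z ∈ lowPreimage i g ↔ (g z : ℕ) < i := by
  simp [lowPreimage]

lemma card_lowPreimage_mem_Icc {g : Fin n → Fin (i + j)} (hg : Function.Surjective g) :
    (lowPreimage i g).card ∈ Icc i (n - j) := by
  have hlow : i ≤ (lowPreimage i g).card := by
    simpa using card_le_card_of_surjOn (t := range i) (fun z => (g z : ℕ)) fun c hc => by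
      obtain ⟨z, hz⟩ := hg ⟨c, Nat.lt_add_right j (by simpa using hc)⟩
      refine ⟨z, mem_lowPreimage.2 ?_, by simp [hz]⟩
      simpa [hz] using hc
  have hhigh : j ≤ (univ.filter fun z => ¬ (g z : ℕ) < i).card := by
    simpa using card_le_card_of_surjOn (t := range j) (fun z => (g z : ℕ) - i) fun c hc => by
      obtain ⟨z, hz⟩ := hg (Fin.natAdd i ⟨c, by simpa using hc⟩)
      exact ⟨z, by simp_all⟩
  have hsplit := card_filter_add_card_filter_not (s := univ) fun z => (g z : ℕ) < i
  simp only [card_univ, Fintype.card_fin] at hsplit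
  rw [lowPreimage] at hlow ⊢
  rw [mem_Icc]
  omega

lemma exists_equiv_lt_iff_mem {A : Finset (Fin n)} (hA : A.card = k) (h : n = k + m) :
    ∃ e : Fin n ≃ Fin (k + m), ∀ z, (e z : ℕ) < k ↔ z ∈ A := by
  have e₁ : {z // z ∈ A} ≃ Fin k := A.equivFinOfCardEq hA
  have e₂ : {z // z ∉ A} ≃ Fin m := Fintype.equivFinOfCardEq (by simp [hA]; omega)
  refine ⟨(Equiv.sumCompl (· ∈ A)).symm.trans ((e₁.sumCongr e₂).trans finSumFinEquiv), fun z => ?_⟩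
  by_cases hz : z ∈ A <;>
    simp [hz, Equiv.sumCompl_symm_apply_of_pos, Equiv.sumCompl_symm_apply_of_neg]

lemma sum_lowPreimage_eq_sum_comp_equiv {A : Finset (Fin n)} (e : Fin n ≃ Fin (k + m))
    (he : ∀ z, (e z : ℕ) < k ↔ z ∈ A) (Φ : (Fin n → Fin (i + j)) → ℝ) :
    ∑ g ∈ surjs n (i + j) with lowPreimage i g = A, Φ g
      = ∑ G ∈ surjs (k + m) (i + j) with ∀ x : Fin (k + m), (G x : ℕ) < i ↔ (x : ℕ) < k,
          Φ (G ∘ e) := by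
  have hiff (g : Fin n → Fin (i + j)) :
      lowPreimage i g = A ↔ ∀ x : Fin (k + m), ((g ∘ e.symm) x : ℕ) < i ↔ (x : ℕ) < k := by
    simp only [Finset.ext_iff, mem_lowPreimage]
    exact ⟨fun hg x => by simpa [← he] using hg (e.symm x),
      fun hg z => by simpa [he] using hg (e z)⟩
  refine sum_nbij' (· ∘ e.symm) (· ∘ e) ?_ ?_ ?_ ?_ ?_
  · intro g hg
    simp only [mem_filter, mem_surjs, hiff, Equiv.surjective_comp] at hg ⊢
    exact hg
  · intro G hG
    simp only [mem_filter, mem_surjs, hiff, Equiv.surjective_comp] at hG ⊢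
    simpa [Function.comp_assoc] using hG
  all_goals intro _ _; simp [Function.comp_assoc]

end LowPreimage

noncomputable def blockSum (W : ℕ → ℝ) (i j k m : ℕ) (Φ : (Fin (k + m) → Fin (i + j)) → ℝ) : ℝ :=
  ∑ g₁ ∈ surjs k i, ∑ g₂ ∈ surjs m j, surjWeight W g₁ * surjWeight W g₂ * Φ (blockMap g₁ g₂)

section Convolution

variable {n i j k m : ℕ} (W : ℕ → ℝ) (F : (Fin n → Fin (i + j)) → ℝ)
  (hF : ∀ (σ : Equiv.Perm (Fin n)) g, F (g ∘ σ) = F g)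
include hF

lemma sum_lowPreimage_eq_blockSum (h : n = k + m) {A : Finset (Fin n)} (hA : A.card = k) :
    ∑ g ∈ surjs n (i + j) with lowPreimage i g = A, surjWeight W g * F g
      = blockSum W i j k m fun G => F (G ∘ Fin.cast h) := by
  obtain ⟨e, he⟩ := exists_equiv_lt_iff_mem hA h
  rw [sum_lowPreimage_eq_sum_comp_equiv e he, sum_surjs_blockMap]
  refine sum_congr rfl fun g₁ _ => sum_congr rfl fun g₂ _ => ?_
  have hσ : blockMap g₁ g₂ ∘ e = (blockMap g₁ g₂ ∘ Fin.cast h) ∘ e.trans (finCongr h).symm := by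
    ext; simp
  rw [surjWeight_comp_equiv, surjWeight_blockMap, hσ, hF]

lemma sum_card_lowPreimage_eq (h : n = k + m) :
    ∑ g ∈ surjs n (i + j) with (lowPreimage i g).card = k, surjWeight W g * F g
      = n.choose k * blockSum W i j k m fun G => F (G ∘ Fin.cast h) := by
  rw [← sum_fiberwise_of_maps_to (t := powersetCard k univ) (g := lowPreimage i)
    fun g hg => by simpa using (mem_filter.1 hg).2]
  have hA : ∀ A ∈ powersetCard k univ,
      ∑ g ∈ (surjs n (i + j)).filter (fun g => (lowPreimage i g).card = k)
        with lowPreimage i g = A,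
        surjWeight W g * F g = blockSum W i j k m fun G => F (G ∘ Fin.cast h) := by
    intro A hA
    rw [mem_powersetCard] at hA
    rw [filter_filter, ← sum_lowPreimage_eq_blockSum W F hF h hA.2]
    refine sum_congr (filter_congr fun g _ => ?_) fun _ _ => rfl
    exact ⟨And.right, fun hg => ⟨hg ▸ hA.2, hg⟩⟩
  rw [sum_congr rfl hA, sum_const, card_powersetCard, card_univ, Fintype.card_fin, nsmul_eq_mul]

lemma sum_choose_mul_blockSum :
    ∑ k ∈ (Icc i (n - j)).attach, (n.choose k.1 : ℝ) *
        blockSum W i j k.1 (n - k.1)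
          (fun G => F (G ∘ Fin.cast (by have := (mem_Icc.1 k.2).2; omega)))
      = ∑ g ∈ surjs n (i + j), surjWeight W g * F g := by
  rw [sum_congr rfl fun k _ => (sum_card_lowPreimage_eq W F hF _).symm,
    sum_attach (Icc i (n - j))
      fun k => ∑ g ∈ surjs n (i + j) with (lowPreimage i g).card = k, surjWeight W g * F g]
  exact sum_fiberwise_of_maps_to (fun g hg => card_lowPreimage_mem_Icc (mem_surjs.1 hg)) _

end Convolution

lemma symmFun_opTens_surjOp {X : Type*} (W : ℕ → ℝ) {n i j k m : ℕ}
    (h : n = k + m) (f : (Fin n → X) → ℝ) (y : Fin (i + j) → X) :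
    symmFun (i + j) (opTens (surjOp W k i) (surjOp W m j) (castFun h f)) y
      = (∑ π : Equiv.Perm (Fin (i + j)), blockSum W i j k m fun G => f (y ∘ π ∘ G ∘ Fin.cast h))
        / ((i + j).factorial * (i.factorial * j.factorial)) := by
  simp only [symmFun, opTens, surjOp, castFun, append_comp_eq_comp_blockMap]
  simp only [Function.comp_def, blockSum, sum_div, mul_sum, div_div]
  refine sum_congr rfl fun π _ => sum_congr rfl fun g₁ _ => sum_congr rfl fun g₂ _ => ?_
  ring

theorem surjOp_convolution {X : Type*} (W : ℕ → ℝ) {n i j : ℕ} (f : (Fin n → X) → ℝ)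
    (hf : IsSymmFun f) (y : Fin (i + j) → X) :
    ((i + j).choose i : ℝ) * surjOp W n (i + j) f y
      = ∑ k ∈ (Icc i (n - j)).attach, (n.choose k.1 : ℝ) *
          symmFun (i + j) (opTens (surjOp W k.1 i) (surjOp W (n - k.1) j)
            (castFun (by have := (mem_Icc.1 k.2).2; omega) f)) y := by
  have hchoose : ((i + j).choose i : ℝ) * (i.factorial * j.factorial) = (i + j).factorial := by
    have := Nat.choose_mul_factorial_mul_factorial (Nat.le_add_right i j)
    rw [Nat.add_sub_cancel_left] at this
    exact_mod_cast (mul_assoc _ _ _).symm.trans this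
  simp only [symmFun_opTens_surjOp, mul_div_assoc', ← sum_div, mul_sum]
  have hπ (π : Equiv.Perm (Fin (i + j))) :
      ∑ k ∈ (Icc i (n - j)).attach, (n.choose k.1 : ℝ) *
          blockSum W i j k.1 (n - k.1) (fun G => f (y ∘ π ∘ G ∘ Fin.cast (by
            have := (mem_Icc.1 k.2).2; omega)))
        = ∑ g ∈ surjs n (i + j), surjWeight W g * f (y ∘ g) :=
    (sum_choose_mul_blockSum W (fun g => f (y ∘ π ∘ g)) fun σ g => hf σ (y ∘ π ∘ g)).trans
      (sum_surjs_perm_comp W (fun g => f (y ∘ g)) π)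
  rw [sum_comm, sum_congr rfl fun π _ => hπ π, sum_const, card_univ, Fintype.card_perm,
    Fintype.card_fin, nsmul_eq_mul, surjOp, ← hchoose]
  field_simp

lemma sop_eq_surjOp {X : Type*} (n k : ℕ) :
    sop (X := X) n k = surjOp (fun c => (-1) ^ (c - 1) * ((c - 1).factorial : ℝ)) n k := by
  funext f y
  simp only [sop, cop, surjOp, mul_div_assoc', mul_sum]
  refine congrArg (· / _) (sum_congr rfl fun g hg => ?_)
  have hsign : ∑ t, (fiberCard g t - 1) = n - k := by
    rw [sum_tsub_distrib _ fun t _ => one_le_fiberCard (mem_surjs.1 hg) t, sum_fiberCard]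
    simp
  rw [surjWeight, prod_mul_distrib, prod_pow_eq_pow_sum, hsign, mul_assoc]

lemma Sop_eq_surjOp {X : Type*} (n k : ℕ) : Sop (X := X) n k = surjOp (fun _ => 1) n k := by
  funext f y
  simp [Sop, surjOp, surjWeight]

/-- convolution identity for the Stirling operators: for `i ≤ n`,
`j ≤ n − i`, `C(i+j,i)·s(n,i+j) = Σ_{k=i}^{n−j} C(n,k)·Sym_{i+j}(s(k,i) ⊗ s(n−k,j))`
on symmetric functions on `X^n`, and the same identity with `s` replaced by `S`. -/
theorem stirling_convolution
    {X : Type*} {n i j : ℕ}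
    (f : (Fin n → X) → ℝ) (hf : IsSymmFun f) :
    (∀ y : Fin (i + j) → X,
        (((i + j).choose i : ℝ)) * sop n (i + j) f y
          = ∑ k ∈ (Finset.Icc i (n - j)).attach,
              (n.choose k.1 : ℝ) *
                symmFun (i + j)
                  (opTens (sop k.1 i) (sop (n - k.1) j)
                    (castFun (by have := Finset.mem_Icc.mp k.2; omega) f)) y)
    ∧ (∀ y : Fin (i + j) → X,
        (((i + j).choose i : ℝ)) * Sop n (i + j) f y
          = ∑ k ∈ (Finset.Icc i (n - j)).attach,
              (n.choose k.1 : ℝ) *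
                symmFun (i + j)
                  (opTens (Sop k.1 i) (Sop (n - k.1) j)
                    (castFun (by have := Finset.mem_Icc.mp k.2; omega) f)) y) := by
  simp only [sop_eq_surjOp, Sop_eq_surjOp]
  exact ⟨surjOp_convolution _ f hf, surjOp_convolution _ f hf⟩
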